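/- arXiv:2402.11582 — 2 statements merged into one kernel-verified Lean document; each statement's English description precedes it below -/
import Mathlib

section
/- For natural numbers n, α, f with f + α ≤ n, the no-detection probability Hyp(n, α, f, 1) = C(n-f, α)/C(n, α) is at most ((n-α)/n)^f. -/
lemma hyp_aux (n α f : ℕ) (h : f + α ≤ n) :
    (n - f).choose α * n ^ f ≤ n.choose α * (n - α) ^ f := by
  induction f with
  | zero => simp
  | succ f ih =>
    have h' : f + α ≤ n := by omega
    have ih' := ih h'
    set m := n - f with hm
    have hαm : α + 1 ≤ m := by omega
    have hm1 : n - (f + 1) = m - 1 := by omega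
    have key : (m - 1).choose α * n ≤ m.choose α * (n - α) := by
      have hid : (m - 1).choose α * m = m.choose α * (m - α) := by
        have := Nat.choose_mul_succ_eq (m - 1) α
        have hms : m - 1 + 1 = m := by omega
        rw [hms] at this
        exact this
      have hmn : m ≤ n := by omega
      have hineq : (m - α) * n ≤ m * (n - α) := by
        rw [Nat.sub_mul, Nat.mul_sub]
        have hx : m * α ≤ α * n := by
          rw [Nat.mul_comm m α]; exact Nat.mul_le_mul_left α hmn
        omega
      have hm0 : 0 < m := by omega
      have : (m - 1).choose α * n * m ≤ m.choose α * (n - α) * m := by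
        calc (m - 1).choose α * n * m = (m - 1).choose α * m * n := by ring
          _ = m.choose α * (m - α) * n := by rw [hid]
          _ = m.choose α * ((m - α) * n) := by ring
          _ ≤ m.choose α * (m * (n - α)) := Nat.mul_le_mul_left _ hineq
          _ = m.choose α * (n - α) * m := by ring
      exact Nat.le_of_mul_le_mul_right this hm0
    calc (n - (f + 1)).choose α * n ^ (f + 1)
        = ((m - 1).choose α * n) * n ^ f := by rw [hm1]; ring
      _ ≤ (m.choose α * (n - α)) * n ^ f := Nat.mul_le_mul_right _ key
      _ = (n - α) * (m.choose α * n ^ f) := by ring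
      _ ≤ (n - α) * (n.choose α * (n - α) ^ f) := Nat.mul_le_mul_left _ ih'
      _ = n.choose α * (n - α) ^ (f + 1) := by ring

/-- Hyp(n, α, f, 1) = C(n-f, α)/C(n, α) ≤ ((n-α)/n)^f. -/
theorem hyp_no_detection_le (n α f : ℕ) (hn : 0 < n) (h : f + α ≤ n) :
    ((n - f).choose α : ℝ) / (n.choose α : ℝ) ≤ (((n : ℝ) - α) / n) ^ f := by
  have hαn : α ≤ n := by omega
  have hc : 0 < (n.choose α : ℝ) := by
    exact_mod_cast Nat.choose_pos hαn
  have hnR : (0:ℝ) < n := by exact_mod_cast hn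
  have hcast : ((n:ℝ) - α) = ((n - α : ℕ) : ℝ) := by
    push_cast [hαn]; ring
  rw [hcast, div_pow, div_le_div_iff₀ hc (by positivity)]
  have := hyp_aux n α f h
  exact_mod_cast Nat.mul_le_mul_right 1 this |>.trans_eq (by ring) |>.trans_eq' (by ring)
end

section
/- For n ≥ 2, α ≤ n - 2, the forced-abstention privacy bound satisfies 1 - [C(n-2,α)/C(n,α)]·(1 - 2α/n) ≤ 4α/(n-1), where the expression is interpreted over the reals. -/
lemma choose_key (m α : ℕ) (h : α ≤ m) :
    (m + 2).choose α * ((m + 2 - α) * (m + 1 - α)) =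
      m.choose α * ((m + 2) * (m + 1)) := by
  have h1 : (m + 1).choose α * (m + 1 + 1) = (m + 1 + 1).choose α * (m + 1 + 1 - α) :=
    Nat.choose_mul_succ_eq (m + 1) α
  have h2 : m.choose α * (m + 1) = (m + 1).choose α * (m + 1 - α) :=
    Nat.choose_mul_succ_eq m α
  have hs : m + 1 + 1 - α = m + 2 - α := by omega
  rw [hs] at h1
  nlinarith [h1, h2]

/-- Forced-abstention privacy bound: δ₂(n,α) = 1 - Hyp(n,α,2,1)(1 - 2α/n) ≤ 4α/(n-1). -/
theorem delta_two_bound (n α : ℕ) (hn : 2 ≤ n) (hα : α ≤ n - 2) :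
    1 - (((n - 2).choose α : ℝ) / (n.choose α : ℝ)) * (1 - 2 * α / n) ≤
      4 * α / ((n : ℝ) - 1) := by
  obtain ⟨m, rfl⟩ : ∃ m, n = m + 2 := ⟨n - 2, by omega⟩
  have hαm : α ≤ m := by omega
  have hsub : m + 2 - 2 = m := by omega
  rw [hsub]
  have hpos : 0 < ((m + 2).choose α : ℝ) := by
    exact_mod_cast Nat.choose_pos (by omega : α ≤ m + 2)
  have key : ((m + 2).choose α : ℝ) * (((m : ℝ) + 2 - α) * ((m : ℝ) + 1 - α)) =
      (m.choose α : ℝ) * (((m : ℝ) + 2) * ((m : ℝ) + 1)) := by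
    have := choose_key m α hαm
    have c1 : ((m + 2 - α : ℕ) : ℝ) = (m : ℝ) + 2 - α := by
      push_cast [Nat.cast_sub (by omega : α ≤ m + 2)]; ring
    have c2 : ((m + 1 - α : ℕ) : ℝ) = (m : ℝ) + 1 - α := by
      push_cast [Nat.cast_sub (by omega : α ≤ m + 1)]; ring
    calc ((m + 2).choose α : ℝ) * (((m : ℝ) + 2 - α) * ((m : ℝ) + 1 - α))
        = (((m + 2).choose α * ((m + 2 - α) * (m + 1 - α)) : ℕ) : ℝ) := by
          push_cast [c1, c2]; ring
      _ = ((m.choose α * ((m + 2) * (m + 1)) : ℕ) : ℝ) := by rw [this]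
      _ = (m.choose α : ℝ) * (((m : ℝ) + 2) * ((m : ℝ) + 1)) := by push_cast; ring
  have hp : (m.choose α : ℝ) / ((m + 2).choose α : ℝ) =
      (((m : ℝ) + 2 - α) * ((m : ℝ) + 1 - α)) / (((m : ℝ) + 2) * ((m : ℝ) + 1)) := by
    rw [div_eq_div_iff hpos.ne' (by positivity)]
    linarith [key]
  rw [hp]
  have hA : (0 : ℝ) ≤ (α : ℝ) := Nat.cast_nonneg α
  have hAm : (α : ℝ) ≤ (m : ℝ) := Nat.cast_le.mpr hαm
  have hm : (0 : ℝ) ≤ (m : ℝ) := Nat.cast_nonneg m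
  have hN : (0 : ℝ) < (m : ℝ) + 2 := by linarith
  have hN1 : (0 : ℝ) < (m : ℝ) + 1 := by linarith
  push_cast
  rw [show ((m:ℝ) + 2 - 1) = (m:ℝ) + 1 from by ring]
  have expand : 1 - ((m:ℝ) + 2 - α) * ((m:ℝ) + 1 - α) / (((m:ℝ) + 2) * ((m:ℝ) + 1)) *
      (1 - 2 * (α:ℝ) / ((m:ℝ) + 2)) =
      ((((m:ℝ) + 2) ^ 2 * ((m:ℝ) + 1) -
        ((m:ℝ) + 2 - α) * ((m:ℝ) + 1 - α) * ((m:ℝ) + 2 - 2 * α)) /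
        (((m:ℝ) + 2) ^ 2 * ((m:ℝ) + 1))) := by
    field_simp
  rw [expand, div_le_div_iff₀ (by positivity) hN1]
  nlinarith [mul_nonneg hA hA, mul_nonneg (mul_nonneg hA hA) hA,
    mul_nonneg hA hm, mul_nonneg (mul_nonneg hA hA) hm,
    mul_nonneg hA (sub_nonneg.mpr hAm), mul_nonneg (mul_nonneg hA hA) (sub_nonneg.mpr hAm)]
end
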